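/- For a cocycle f ∈ C^n(A, M) (i.e., ∂_M(f) = 0) and z ∈ Z_M(A), the element f • z = Σ_{i=1}^n (−1)^{i−1} f •_i z, where (f •_i z)(a_1 ⊗ ⋯ ⊗ a_{n−1}) = f(a_1 ⊗ ⋯ ⊗ a_{i−1} ⊗ z ⊗ a_i ⊗ ⋯ ⊗ a_{n−1}), is again a Hochschild cocycle: ∂_M(f • z) = 0. -/

import Mathlib

/-!
Inserting a central element `z` in every slot with alternating signs anticommutes with the
Hochschild differential: `∂(φ • z) = -(∂φ) • z` for every cochain `φ`, whence the theorem.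
In `(∂φ) • z`, the terms of the two outer faces in which `z` itself is multiplied onto `φ`
are `z • φ` and `-(φ • z)`, which cancel because `z` acts symmetrically on `M`; the remaining
outer-face terms are those of `-∂(φ • z)`. Among the inner faces, a contraction away from the
inserted `z` commutes with the insertion up to a shift of indices, giving the inner terms of
`-∂(φ • z)`, while contracting `z` with its left or with its right neighbour gives the same tuple
(as `z` is central), so these two terms cancel.
-/

/-- The Hochschild differential `∂ : C^n(A,M) → C^{n+1}(A,M)` on cochains, written for
plain functions `(Fin n → A) → M`. -/
def hochschildDiff {A M : Type*} [Ring A] [AddCommGroup M] [Module A M] [Module Aᵐᵒᵖ M]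
    (n : ℕ) (f : (Fin n → A) → M) : (Fin (n + 1) → A) → M :=
  fun a =>
    a 0 • f (fun i => a i.succ)
      + ∑ i : Fin n, ((-1 : ℤ) ^ ((i : ℕ) + 1)) • f (Fin.contractNth i.castSucc (· * ·) a)
      + ((-1 : ℤ) ^ (n + 1)) • (MulOpposite.op (a (Fin.last n)) • f (fun i => a i.castSucc))

namespace Fin

variable {α : Type*} {n : ℕ}

theorem insertNth_apply_of_lt (j : Fin (n + 1)) (x : α) (a : Fin n → α) (k : Fin (n + 1))
    (h : (k : ℕ) < j) : insertNth (α := fun _ => α) j x a k = a ⟨k, by omega⟩ := by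
  rw [insertNth_apply_below (lt_def.2 h), eq_rec_constant]
  rfl

theorem insertNth_apply_of_eq (j : Fin (n + 1)) (x : α) (a : Fin n → α) (k : Fin (n + 1))
    (h : (k : ℕ) = j) : insertNth (α := fun _ => α) j x a k = x := by
  rw [Fin.ext h, insertNth_apply_same]

theorem insertNth_apply_of_gt (j : Fin (n + 1)) (x : α) (a : Fin n → α) (k : Fin (n + 1))
    (h : (j : ℕ) < k) : insertNth (α := fun _ => α) j x a k = a ⟨(k : ℕ) - 1, by omega⟩ := by
  rw [insertNth_apply_above (lt_def.2 h), eq_rec_constant]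
  rfl

theorem tail_insertNth_succ (j : Fin (n + 1)) (x : α) (a : Fin (n + 1) → α) :
    tail (insertNth (α := fun _ => α) j.succ x a) = insertNth j x (tail a) := by
  conv_lhs => rw [← cons_self_tail a, insertNth_succ_cons]
  rfl

theorem init_insertNth_castSucc (j : Fin (n + 1)) (x : α) (a : Fin (n + 1) → α) :
    init (insertNth (α := fun _ => α) j.castSucc x a) = insertNth j x (init a) := by
  ext k
  cases k using succAboveCases j with
  | x => simp [init]
  | p k => simp [init, ← castSucc_succAbove_castSucc]

variable [Mul α]

theorem contractNth_castSucc_insertNth_of_lt (i : Fin (n + 1)) (j : Fin (n + 2)) (x : α)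
    (a : Fin (n + 1) → α) (h : (i : ℕ) + 1 < j) :
    contractNth i.castSucc (· * ·) (insertNth (α := fun _ => α) j x a)
      = insertNth (α := fun _ => α) ⟨(j : ℕ) - 1, by omega⟩ x (contractNth i (· * ·) a) := by
  funext k
  rcases lt_trichotomy (k : ℕ) i with h1 | h1 | h1 <;>
  rcases lt_trichotomy (k : ℕ) ((j : ℕ) - 1) with h2 | h2 | h2 <;>
  simp (disch := (try simp only [val_castSucc, val_succ]); omega) only
    [contractNth_apply_of_lt, contractNth_apply_of_eq, contractNth_apply_of_gt,
      insertNth_apply_of_lt, insertNth_apply_of_eq, insertNth_apply_of_gt]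
  all_goals first | rfl | (congr 2; simp; omega)

theorem contractNth_castSucc_insertNth_of_gt (i : Fin (n + 1)) (j : Fin (n + 2)) (x : α)
    (a : Fin (n + 1) → α) (h : (j : ℕ) < i) :
    contractNth i.castSucc (· * ·) (insertNth (α := fun _ => α) j x a)
      = insertNth (α := fun _ => α) ⟨j, by omega⟩ x
          (contractNth ⟨(i : ℕ) - 1, by omega⟩ (· * ·) a) := by
  funext k
  rcases lt_trichotomy (k : ℕ) j with h1 | h1 | h1 <;>
  rcases lt_trichotomy (k : ℕ) i with h2 | h2 | h2 <;>
  simp (disch := (try simp only [val_castSucc, val_succ]); omega) only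
    [contractNth_apply_of_lt, contractNth_apply_of_eq, contractNth_apply_of_gt,
      insertNth_apply_of_lt, insertNth_apply_of_eq, insertNth_apply_of_gt]
  all_goals first | rfl | (congr 2; simp [Fin.ext_iff]; omega)

theorem contractNth_castSucc_insertNth_succ (j : Fin (n + 1)) {x : α} (hx : ∀ w, Commute x w)
    (a : Fin (n + 1) → α) :
    contractNth j.castSucc (· * ·) (insertNth (α := fun _ => α) j.succ x a)
      = contractNth j.castSucc (· * ·) (insertNth (α := fun _ => α) j.castSucc x a) := by
  funext k
  rcases lt_trichotomy (k : ℕ) j with h1 | h1 | h1 <;>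
  simp (disch := (try simp only [val_castSucc, val_succ]); omega) only
    [contractNth_apply_of_lt, contractNth_apply_of_eq, contractNth_apply_of_gt,
      insertNth_apply_of_lt, insertNth_apply_of_eq, insertNth_apply_of_gt]
  exact (hx _).eq.symm

end Fin

open Finset in
theorem sum_range_sum_range_eq_of_simplicial {M : Type*} [AddCommMonoid M] (n : ℕ)
    (F G : ℕ → ℕ → M)
    (h_above : ∀ i j, i + 1 < j → j < n + 2 → F i j = G i (j - 1))
    (h_below : ∀ i j, j < i → i < n + 1 → F i j = G (i - 1) j)
    (h_diag : ∀ i, i < n + 1 → F i i + F i (i + 1) = 0) :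
    ∑ i ∈ range (n + 1), ∑ j ∈ range (n + 2), F i j
      = ∑ p ∈ range n, ∑ q ∈ range (n + 1), G p q := by
  have row : ∀ i ∈ range (n + 1), ∑ j ∈ range (n + 2), F i j
      = ∑ j ∈ range i, G (i - 1) j + ∑ q ∈ Ico (i + 1) (n + 1), G i q := by
    intro i hi
    rw [mem_range] at hi
    rw [← sum_range_add_sum_Ico _ (by omega : i ≤ n + 2), sum_eq_sum_Ico_succ_bot (by omega),
      sum_eq_sum_Ico_succ_bot (by omega), ← add_assoc (F i i), h_diag i hi, zero_add,
      ← sum_Ico_add' (F i) (i + 1) (n + 1) 1]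
    congr 1
    · exact sum_congr rfl fun j hj => h_below i j (mem_range.1 hj) hi
    · refine sum_congr rfl fun q hq => ?_
      rw [mem_Ico] at hq
      rw [h_above i (q + 1) (by omega) (by omega), Nat.add_sub_cancel]
  rw [sum_congr rfl row, sum_add_distrib, sum_range_succ', sum_range_succ _ n]
  simp only [range_zero, sum_empty, add_zero, Nat.add_sub_cancel, Ico_self]
  rw [← sum_add_distrib]
  exact sum_congr rfl fun p hp => sum_range_add_sum_Ico _ (Nat.succ_le_succ (mem_range.1 hp).le)

/-- The paper's `φ • z = ∑ᵢ (-1)^(i-1) φ •ᵢ z`, with slots counted from `0` instead of `1`. -/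
def hochschildBullet {A M : Type*} [AddCommGroup M] {n : ℕ} (φ : (Fin (n + 1) → A) → M)
    (z : A) : (Fin n → A) → M :=
  fun v => ∑ i : Fin (n + 1), ((-1 : ℤ) ^ (i : ℕ)) • φ (Fin.insertNth i z v)

section Hochschild

variable {A M : Type*} [Ring A] [AddCommGroup M]

theorem hochschildDiff_apply [Module A M] [Module Aᵐᵒᵖ M] (n : ℕ) (f : (Fin n → A) → M)
    (a : Fin (n + 1) → A) :
    hochschildDiff n f a = a 0 • f (Fin.tail a)
      + ∑ i : Fin n, ((-1 : ℤ) ^ ((i : ℕ) + 1)) • f (Fin.contractNth i.castSucc (· * ·) a)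
      + ((-1 : ℤ) ^ (n + 1)) • (MulOpposite.op (a (Fin.last n)) • f (Fin.init a)) :=
  rfl

variable {n : ℕ} (φ : (Fin (n + 1) → A) → M) (z : A) (a : Fin (n + 1) → A)

theorem alternatingSum_insertNth_head_smul [Module A M] :
    ∑ j : Fin (n + 2), ((-1 : ℤ) ^ (j : ℕ)) •
        (Fin.insertNth (α := fun _ => A) j z a 0 •
          φ (Fin.tail (Fin.insertNth (α := fun _ => A) j z a)))
      = z • φ a - a 0 • hochschildBullet φ z (Fin.tail a) := by
  rw [Fin.sum_univ_succ, hochschildBullet, Finset.smul_sum, sub_eq_add_neg,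
    ← Finset.sum_neg_distrib]
  congr 1
  · simp
  refine Finset.sum_congr rfl fun k _ => ?_
  rw [Fin.tail_insertNth_succ, Fin.insertNth_apply_of_lt _ _ _ _ (by simp), Fin.val_succ,
    pow_succ, mul_smul, neg_one_zsmul, smul_neg, smul_comm ((-1 : ℤ) ^ (k : ℕ))]
  rfl

theorem alternatingSum_insertNth_op_last_smul [Module Aᵐᵒᵖ M] :
    ∑ j : Fin (n + 2), ((-1 : ℤ) ^ (j : ℕ)) • (((-1 : ℤ) ^ (n + 1 + 1)) •
        (MulOpposite.op (Fin.insertNth (α := fun _ => A) j z a (Fin.last (n + 1))) •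
          φ (Fin.init (Fin.insertNth (α := fun _ => A) j z a))))
      = -(MulOpposite.op z • φ a) - ((-1 : ℤ) ^ (n + 1)) •
          (MulOpposite.op (a (Fin.last n)) • hochschildBullet φ z (Fin.init a)) := by
  rw [Fin.sum_univ_castSucc, hochschildBullet, Finset.smul_sum, Finset.smul_sum, sub_eq_add_neg,
    ← Finset.sum_neg_distrib, add_comm]
  congr 1
  · rw [Fin.insertNth_last', Fin.init_snoc, Fin.snoc_last, Fin.val_last, smul_smul, ← pow_add,
      Odd.neg_one_pow ⟨n + 1, by ring⟩, neg_one_zsmul]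
  refine Finset.sum_congr rfl fun k _ => ?_
  rw [Fin.init_insertNth_castSucc,
    Fin.insertNth_apply_of_gt _ _ _ _ (Fin.lt_def.1 (Fin.castSucc_lt_last k)),
    smul_comm _ ((-1 : ℤ) ^ (k : ℕ)) (φ _), smul_smul, smul_smul, ← neg_smul]
  congr 1
  rw [Fin.val_castSucc]
  ring

theorem alternatingSum_insertNth_contractNth (hz : ∀ w, Commute z w) :
    ∑ j : Fin (n + 2), ((-1 : ℤ) ^ (j : ℕ)) • ∑ i : Fin (n + 1), ((-1 : ℤ) ^ ((i : ℕ) + 1)) •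
        φ (Fin.contractNth i.castSucc (· * ·) (Fin.insertNth (α := fun _ => A) j z a))
      = -∑ p : Fin n, ((-1 : ℤ) ^ ((p : ℕ) + 1)) •
          hochschildBullet φ z (Fin.contractNth p.castSucc (· * ·) a) := by
  let F : ℕ → ℕ → M := fun i j => if h : i < n + 1 ∧ j < n + 2 then
      ((-1 : ℤ) ^ (i + j + 1)) • φ (Fin.contractNth (⟨i, h.1⟩ : Fin (n + 1)).castSucc (· * ·)
        (Fin.insertNth (α := fun _ => A) ⟨j, h.2⟩ z a))
    else 0
  let G : ℕ → ℕ → M := fun p q => if h : p < n ∧ q < n + 1 then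
      ((-1 : ℤ) ^ (p + q)) • φ (Fin.insertNth (α := fun _ => A) ⟨q, h.2⟩ z
        (Fin.contractNth (⟨p, h.1⟩ : Fin n).castSucc (· * ·) a))
    else 0
  have h_above : ∀ i j, i + 1 < j → j < n + 2 → F i j = G i (j - 1) := by
    intro i j hij hj
    simp only [F, G, dif_pos (And.intro (by omega : i < n + 1) hj),
      dif_pos (And.intro (by omega : i < n) (by omega : j - 1 < n + 1))]
    rw [Fin.contractNth_castSucc_insertNth_of_lt _ _ _ _ hij,
      show i + j + 1 = i + (j - 1) + 2 by omega, pow_add, neg_one_sq, mul_one]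
    rfl
  have h_below : ∀ i j, j < i → i < n + 1 → F i j = G (i - 1) j := by
    intro i j hji hi
    simp only [F, G, dif_pos (And.intro hi (by omega : j < n + 2)),
      dif_pos (And.intro (by omega : i - 1 < n) (by omega : j < n + 1))]
    rw [Fin.contractNth_castSucc_insertNth_of_gt _ _ _ _ hji,
      show i + j + 1 = i - 1 + j + 2 by omega, pow_add, neg_one_sq, mul_one]
    rfl
  have h_diag : ∀ i, i < n + 1 → F i i + F i (i + 1) = 0 := by
    intro i hi
    simp only [F, dif_pos (And.intro hi (by omega : i < n + 2)),
      dif_pos (And.intro hi (by omega : i + 1 < n + 2))]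
    rw [show (⟨i + 1, _⟩ : Fin (n + 2)) = (⟨i, hi⟩ : Fin (n + 1)).succ from rfl,
      Fin.contractNth_castSucc_insertNth_succ _ hz, Odd.neg_one_pow ⟨i, by ring⟩,
      Even.neg_one_pow ⟨i + 1, by ring⟩, neg_one_zsmul, one_smul]
    exact neg_add_cancel _
  calc _ = ∑ i ∈ Finset.range (n + 1), ∑ j ∈ Finset.range (n + 2), F i j := by
        simp_rw [Finset.smul_sum]
        rw [Finset.sum_comm, ← Fin.sum_univ_eq_sum_range]
        refine Finset.sum_congr rfl fun i _ => ?_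
        rw [← Fin.sum_univ_eq_sum_range]
        refine Finset.sum_congr rfl fun j _ => ?_
        simp only [F, dif_pos (And.intro i.isLt j.isLt), smul_smul, ← pow_add]
        rw [show (j : ℕ) + (i + 1) = i + j + 1 by ring]
    _ = ∑ p ∈ Finset.range n, ∑ q ∈ Finset.range (n + 1), G p q :=
        sum_range_sum_range_eq_of_simplicial n F G h_above h_below h_diag
    _ = _ := by
        rw [← Fin.sum_univ_eq_sum_range, ← Finset.sum_neg_distrib]
        refine Finset.sum_congr rfl fun p _ => ?_
        rw [← Fin.sum_univ_eq_sum_range, hochschildBullet, Finset.smul_sum,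
          ← Finset.sum_neg_distrib]
        refine Finset.sum_congr rfl fun q _ => ?_
        simp only [G, dif_pos (And.intro p.isLt q.isLt), smul_smul, ← neg_smul]
        congr 1
        ring

theorem hochschildDiff_hochschildBullet [Module A M] [Module Aᵐᵒᵖ M] (hz : z ∈ Set.center A)
    (hzM : z • φ a = MulOpposite.op z • φ a) :
    hochschildDiff n (hochschildBullet φ z) a
      = -hochschildBullet (hochschildDiff (n + 1) φ) z a := by
  conv_rhs => simp only [hochschildBullet, hochschildDiff_apply, smul_add, Finset.sum_add_distrib]
  rw [hochschildDiff_apply, alternatingSum_insertNth_head_smul,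
    alternatingSum_insertNth_contractNth _ _ _ hz.comm, alternatingSum_insertNth_op_last_smul, hzM]
  abel

end Hochschild

theorem cocycle_bullet_central_element_is_cocycle_general
    (K A M : Type*) [CommRing K] [Ring A] [Algebra K A]
    [AddCommGroup M] [Module K M] [Module A M] [Module Aᵐᵒᵖ M]
    (n : ℕ) (f : MultilinearMap K (fun _ : Fin (n + 1) => A) M)
    (z : A) (hz : z ∈ Set.center A) (hzM : ∀ m : M, z • m = MulOpposite.op z • m)
    (hf : ∀ a : Fin (n + 2) → A, hochschildDiff (n + 1) (⇑f) a = 0) :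
    ∀ a : Fin (n + 1) → A,
      hochschildDiff n
        (fun v => ∑ i : Fin (n + 1), ((-1 : ℤ) ^ (i : ℕ)) • f (Fin.insertNth i z v)) a = 0 := by
  intro a
  calc hochschildDiff n (hochschildBullet (⇑f) z) a
      = -hochschildBullet (hochschildDiff (n + 1) ⇑f) z a :=
        hochschildDiff_hochschildBullet _ _ _ hz (hzM _)
    _ = 0 := by simp [hochschildBullet, hf]

theorem cocycle_bullet_central_element_is_cocycle
    (K A M : Type*) [CommRing K] [Ring A] [Algebra K A]
    [AddCommGroup M] [Module K M] [Module A M] [Module Aᵐᵒᵖ M] [SMulCommClass A Aᵐᵒᵖ M]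
    (n : ℕ) (f : MultilinearMap K (fun _ : Fin (n + 1) => A) M)
    (z : A) (hz : z ∈ Set.center A) (hzM : ∀ m : M, z • m = MulOpposite.op z • m)
    (hf : ∀ a : Fin (n + 2) → A, hochschildDiff (n + 1) (⇑f) a = 0) :
    ∀ a : Fin (n + 1) → A,
      hochschildDiff n
        (fun v => ∑ i : Fin (n + 1), ((-1 : ℤ) ^ (i : ℕ)) • f (Fin.insertNth i z v)) a = 0 :=
  cocycle_bullet_central_element_is_cocycle_general K A M n f z hz hzM hf
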